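/- arXiv:2504.00447 — 2 statements merged into one kernel-verified Lean document; each statement's English description precedes it below -/
import Mathlib

section
/- Consider the ACP recursion β_{t+1} = β_t + γ(α − e_t) where γ > 0, α ∈ (0,1), e_t ∈ {0,1}, β_0 ∈ [0,1], and, for a fixed delay i ≥ 0, whenever β_t ≤ 0 the error indicator satisfies e_{t+i} = 0 (the confidence set is the whole space, so no miscoverage occurs i steps later). Then β_t ≥ −(i+1)γ for all t ≥ 0. -/
theorem stmt6 (γ α : ℝ) (hγ : 0 < γ) (hα : α ∈ Set.Ioo (0 : ℝ) 1)
    (i : ℕ) (β e : ℕ → ℝ)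
    (he : ∀ t, e t = 0 ∨ e t = 1)
    (hβ0 : β 0 ∈ Set.Icc (0 : ℝ) 1)
    (hrec : ∀ t, β (t + 1) = β t + γ * (α - e t))
    (hcov : ∀ t, β t ≤ 0 → e (t + i) = 0) :
    ∀ t, -((i + 1 : ℕ) : ℝ) * γ ≤ β t := by
  obtain ⟨hα0, hα1⟩ := hα
  have hstep : ∀ s, β s - γ ≤ β (s + 1) := by
    intro s
    have h := hrec s
    rcases he s with h1 | h1 <;> rw [h1] at h <;> nlinarith
  have hback : ∀ m k, β m ≤ β (m + k) + k * γ := by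
    intro m k
    induction k with
    | zero => simp
    | succ k ih =>
      have h2 : β (m + k) - γ ≤ β (m + k + 1) := hstep (m + k)
      have h3 : m + (k + 1) = m + k + 1 := by ring
      rw [h3]
      push_cast
      linarith
  have hin : (0:ℝ) ≤ ((i + 1 : ℕ) : ℝ) := by positivity
  intro t
  induction t with
  | zero =>
    have := hβ0.1
    nlinarith
  | succ t ih =>
    have h := hrec t
    rcases he t with h1 | h1
    · rw [h1] at h
      nlinarith
    · rw [h1] at h
      by_cases hc : β t < -(i : ℝ) * γ
      · exfalso
        have hti : i ≤ t := by
          by_contra hlt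
          push_neg at hlt
          have hb := hback 0 t
          simp at hb
          have : (t : ℝ) < (i : ℝ) := by exact_mod_cast hlt
          have := hβ0.1
          nlinarith
        have hb := hback (t - i) i
        rw [Nat.sub_add_cancel hti] at hb
        have hle : β (t - i) ≤ 0 := by nlinarith
        have := hcov (t - i) hle
        rw [Nat.sub_add_cancel hti] at this
        rw [this] at h1
        norm_num at h1
      · push_neg at hc
        push_cast
        nlinarith
end

section
/- Consider the ACP recursion β_{t+1} = β_t + γ(α − e_t) with γ > 0, α ∈ (0,1), e_t ∈ {0,1}, β_0 ∈ [0,1], and the property that if β_t ≥ 1 then e_{t+i} = 1 for a fixed delay i ≥ 0 (formally: β_t ≥ 1 implies e_{t+i} = 1). Then β_t ≤ 1 + (i+1)γ for all t ≥ 0. -/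
theorem stmt7 (γ α : ℝ) (hγ : 0 < γ) (hα : α ∈ Set.Ioo (0 : ℝ) 1)
    (i : ℕ) (β e : ℕ → ℝ)
    (he : ∀ t, e t = 0 ∨ e t = 1)
    (hβ0 : β 0 ∈ Set.Icc (0 : ℝ) 1)
    (hrec : ∀ t, β (t + 1) = β t + γ * (α - e t))
    (hmis : ∀ t, 1 ≤ β t → e (t + i) = 1) :
    ∀ t, β t ≤ 1 + ((i + 1 : ℕ) : ℝ) * γ := by
  obtain ⟨hα0, hα1⟩ := hα
  have henn : ∀ t, 0 ≤ e t := by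
    intro t; rcases he t with h | h <;> simp [h]
  have step : ∀ u k, β (u + k) ≤ β u + (k : ℝ) * γ * α := by
    intro u k
    induction k with
    | zero => simp
    | succ k ih =>
      have := hrec (u + k)
      have := henn (u + k)
      push_cast
      rw [← Nat.add_assoc, hrec (u + k)]
      push_cast at ih
      nlinarith
  intro t
  induction t using Nat.strong_induction_on with
  | _ t ih =>
    by_cases ht : t ≤ i + 1
    · have h1 := step 0 t
      simp at h1
      have htr : (t : ℝ) ≤ ((i + 1 : ℕ) : ℝ) := by exact_mod_cast ht
      push_cast at htr ⊢
      nlinarith [hβ0.2, mul_le_mul_of_nonneg_right htr hγ.le, mul_nonneg (Nat.cast_nonneg t : (0:ℝ) ≤ t) hγ.le]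
    · push_neg at ht
      -- t ≥ i + 2, write t = s + 1 with s ≥ i + 1
      obtain ⟨s, rfl⟩ : ∃ s, t = s + 1 := ⟨t - 1, by omega⟩
      have hs : i ≤ s := by omega
      set u := s - i with hu
      have huu : u + i = s := by omega
      by_contra hcon
      push_neg at hcon
      have hstep : β (u + (i + 1)) ≤ β u + ((i + 1 : ℕ) : ℝ) * γ * α := step u (i + 1)
      have heq : u + (i + 1) = s + 1 := by omega
      rw [heq] at hstep
      have hβu : 1 ≤ β u := by
        have hpos : (0 : ℝ) < ((i + 1 : ℕ) : ℝ) := by positivity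
        nlinarith [mul_pos (mul_pos hpos hγ) (show (0:ℝ) < 1 - α by linarith)]
      have he1 : e s = 1 := by have := hmis u hβu; rwa [huu] at this
      have hih : β s ≤ 1 + ((i + 1 : ℕ) : ℝ) * γ := ih s (by omega)
      have := hrec s
      rw [he1] at this
      nlinarith
end
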